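/- arXiv:2005.11307 — 5 statements merged into one kernel-verified Lean document; each statement's English description precedes it below -/
import Mathlib

section
/- (Galois connection for ∧-definability) Let B be a finite structure, I a finite set, and T a nonempty set of mappings from I to B; for i ∈ I let π_i: T → B be π_i(t) = t(i). Then ⟨T⟩_B, the smallest ∧-definable set of maps from I to B over B containing T, equals the set of maps of the form i ↦ p(π_i) where p: B^T → B ranges over partial polymorphisms of B with domain exactly {π_i : i ∈ I}. -/
/-- A relational structure on universe `B`: a signature of relation symbols
with arities, and an interpretation of each symbol. -/
structure RelStruct (B : Type) where
  symb : Type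
  arity : symb → ℕ
  rel : (s : symb) → (Fin (arity s) → B) → Prop

/-- An ∧-formula over the signature of `S` with variables from `I`:
a set of atoms and a set of variable equalities. -/
structure AndFormula {B : Type} (S : RelStruct B) (I : Type) where
  atoms : Set ((s : S.symb) × (Fin (S.arity s) → I))
  eqs : Set (I × I)

/-- Satisfaction of an ∧-formula by an assignment `f : I → B`. -/
def AndFormula.Sat {B : Type} {S : RelStruct B} {I : Type}
    (φ : AndFormula S I) (f : I → B) : Prop :=
  (∀ a ∈ φ.atoms, S.rel a.1 (fun j => f (a.2 j))) ∧ ∀ e ∈ φ.eqs, f e.1 = f e.2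

/-- A set of maps `I → B` is ∧-definable over `S` if it is the set of
satisfying assignments of some ∧-formula. -/
def Definable {B : Type} (S : RelStruct B) {I : Type} (T : Set (I → B)) : Prop :=
  ∃ φ : AndFormula S I, T = {f | φ.Sat f}

/-- `⟨T⟩_B`: the smallest ∧-definable set of maps containing `T`
(realized as the intersection of all ∧-definable supersets). -/
def closureB {B : Type} (S : RelStruct B) {I : Type} (T : Set (I → B)) : Set (I → B) :=
  ⋂₀ {G | Definable S G ∧ T ⊆ G}

/-- An automorphism of `S`: a bijection preserving every relation in both directions. -/
def IsAuto {B : Type} (S : RelStruct B) (γ : B → B) : Prop :=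
  Function.Bijective γ ∧
    ∀ (s : S.symb) (v : Fin (S.arity s) → B), S.rel s v ↔ S.rel s (fun j => γ (v j))

/-- A partial polymorphism of the structure `S` (partial maps represented via `Option`). -/
def IsPPoly {B : Type} (S : RelStruct B) {J : Type} (q : (J → B) → Option B) : Prop :=
  ∀ (s : S.symb) (sel : J → (Fin (S.arity s) → B)), (∀ j, S.rel s (sel j)) →
    ∀ u : Fin (S.arity s) → B, (∀ m, q (fun j => sel j m) = some (u m)) → S.rel s u

/-- A partial polymorphism of a set `T` of maps `I → B`. -/
def IsPPolyOf {B I J : Type} (T : Set (I → B)) (q : (J → B) → Option B) : Prop :=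
  ∀ sel : J → (I → B), (∀ j, sel j ∈ T) →
    ∀ u : I → B, (∀ i, q (fun j => sel j i) = some (u i)) → u ∈ T

/-- `T` is surjectively closed over `S`: every surjective member of `⟨T⟩_B`
is `γ ∘ t` for an automorphism `γ` and some `t ∈ T`. -/
def SurjClosed {B I : Type} (S : RelStruct B) (T : Set (I → B)) : Prop :=
  ∀ t' ∈ closureB S T, Function.Surjective t' →
    ∃ γ : B → B, IsAuto S γ ∧ ∃ t ∈ T, t' = fun i => γ (t i)

/-- Galois connection: `⟨T⟩_B` is exactly the set of maps of the form
`i ↦ p(π_i)` where `p : B^T → B` ranges over partial polymorphisms of `S`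
whose domain is exactly `{π_i : i ∈ I}`. -/
theorem stmt3 {B I : Type} [Fintype B] [Fintype I] (S : RelStruct B)
    (T : Set (I → B)) (hT : T.Nonempty) :
    closureB S T =
      {t' | ∃ q : (↥T → B) → Option B, IsPPoly S q ∧
        (∀ h : ↥T → B, (∃ b, q h = some b) ↔ ∃ i : I, h = fun t => t.1 i) ∧
        ∀ i : I, q (fun t => t.1 i) = some (t' i)} := by
  classical
  ext t'
  constructor
  · intro ht'
    -- canonical formula
    set φ : AndFormula S I :=
      ⟨{a | ∀ t ∈ T, S.rel a.1 (fun j => t (a.2 j))}, {e | ∀ t ∈ T, t e.1 = t e.2}⟩ with hφ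
    have hsat : φ.Sat t' := by
      have hmem : {f | φ.Sat f} ∈ {G | Definable S G ∧ T ⊆ G} := by
        refine ⟨⟨φ, rfl⟩, fun t ht => ⟨fun a ha => ha t ht, fun e he => he t ht⟩⟩
      exact ht' _ hmem
    refine ⟨fun h => if hh : ∃ i : I, h = fun t => t.1 i then some (t' hh.choose)
      else none, ?_, ?_, ?_⟩
    · intro s sel hsel u hu
      have key : ∀ m, ∃ i : I, ((fun t : ↥T => sel t m) = fun t => t.1 i) ∧ u m = t' i := by
        intro m
        have hm := hu m
        simp only [] at hm
        by_cases hh : ∃ i : I, (fun t : ↥T => sel t m) = fun t => t.1 i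
        · rw [dif_pos hh] at hm
          exact ⟨hh.choose, hh.choose_spec, (Option.some_inj.mp hm).symm⟩
        · rw [dif_neg hh] at hm; simp at hm
      choose v hv1 hv2 using key
      have hatom : (⟨s, v⟩ : (s : S.symb) × (Fin (S.arity s) → I)) ∈ φ.atoms := by
        intro t ht
        have hsel' : (fun m => t (v m)) = sel ⟨t, ht⟩ := by
          funext m; exact (congrFun (hv1 m) ⟨t, ht⟩).symm
        rw [hsel']; exact hsel ⟨t, ht⟩
      have := hsat.1 _ hatom
      have hu' : u = fun m => t' (v m) := funext fun m => hv2 m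
      rw [hu']; exact this
    · intro h
      constructor
      · rintro ⟨b, hb⟩
        simp only [] at hb
        by_cases hh : ∃ i : I, h = fun t => t.1 i
        · exact hh
        · rw [dif_neg hh] at hb; exact absurd hb (by simp)
      · intro hh
        refine ⟨t' hh.choose, ?_⟩
        simp only []
        rw [dif_pos hh]
    · intro i
      have hh : ∃ i' : I, (fun t : ↥T => t.1 i) = fun t => t.1 i' := ⟨i, rfl⟩
      simp only []
      rw [dif_pos hh]
      have heq : (hh.choose, i) ∈ φ.eqs := by
        intro t ht
        exact (congrFun hh.choose_spec ⟨t, ht⟩).symm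
      rw [hsat.2 _ heq]
  · rintro ⟨q, hq, hdom, hval⟩
    rintro G ⟨⟨φ, rfl⟩, hTG⟩
    refine ⟨?_, ?_⟩
    · intro a ha
      exact hq a.1 (fun t m => t.1 (a.2 m))
        (fun t => (hTG t.2).1 a ha) _ (fun m => hval (a.2 m))
    · intro e he
      have h1 := hval e.1
      have hpe : (fun t : ↥T => t.1 e.1) = fun t => t.1 e.2 :=
        funext fun t => (hTG t.2).2 e he
      rw [hpe, hval e.2] at h1
      exact (Option.some_inj.mp h1).symm
end

section
/- Let B be a finite structure, I a finite set, T a set of maps from I to B, and π_i: T → B defined by π_i(t) = t(i). Then T is surjectively closed over B (i.e., every surjective map in ⟨T⟩_B is of the form γ ∘ t for an automorphism γ of B and t ∈ T) if and only if every surjective partial polymorphism p: B^T → B of B with domain {π_i : i ∈ I} is automorphism-like, i.e., there exist t ∈ T and an automorphism γ of B such that p(π_i) = γ(π_i(t)) for all i ∈ I. -/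
/-- If `π_i = π_j` on `T`, then any member of the closure identifies `i` and `j`. -/
lemma closure_eq_of_pi_eq {B I : Type} (S : RelStruct B) (T : Set (I → B))
    {t' : I → B} (ht' : t' ∈ closureB S T) {i j : I}
    (h : (fun t : ↥T => t.1 i) = (fun t : ↥T => t.1 j)) : t' i = t' j := by
  have hmem := ht' {f | AndFormula.Sat (⟨∅, {(i, j)}⟩ : AndFormula S I) f}
    ⟨⟨_, rfl⟩, by
      intro f hf
      refine ⟨fun a ha => absurd ha (Set.notMem_empty a), fun e he => ?_⟩
      rcases he with rfl
      exact congrFun h ⟨f, hf⟩⟩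
  exact hmem.2 (i, j) rfl

/-- If every member of `T` satisfies an atom, so does any member of the closure. -/
lemma closure_rel {B I : Type} (S : RelStruct B) (T : Set (I → B))
    {t' : I → B} (ht' : t' ∈ closureB S T) (s : S.symb)
    (iv : Fin (S.arity s) → I) (hT : ∀ t ∈ T, S.rel s (fun m => t (iv m))) :
    S.rel s (fun m => t' (iv m)) := by
  have hmem := ht' {f | AndFormula.Sat (⟨{⟨s, iv⟩}, ∅⟩ : AndFormula S I) f}
    ⟨⟨_, rfl⟩, by
      intro f hf
      refine ⟨fun a ha => ?_, fun e he => absurd he (Set.notMem_empty e)⟩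
      rcases ha with rfl
      exact hT f hf⟩
  exact hmem.1 ⟨s, iv⟩ rfl

/-- `T` is surjectively closed over `S` iff every surjective partial
polymorphism `p : B^T → B` of `S` with domain exactly `{π_i : i ∈ I}`
is automorphism-like. -/
theorem stmt4 {B I : Type} [Fintype B] [Fintype I] (S : RelStruct B)
    (T : Set (I → B)) :
    SurjClosed S T ↔
      ∀ q : (↥T → B) → Option B, IsPPoly S q →
        (∀ h : ↥T → B, (∃ b, q h = some b) ↔ ∃ i : I, h = fun t => t.1 i) →
        (∀ b : B, ∃ h, q h = some b) →
        ∃ (t : ↥T) (γ : B → B), IsAuto S γ ∧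
          ∀ h b, q h = some b → b = γ (h t) := by
  constructor
  · -- SurjClosed → polymorphism condition
    intro hSC q hpoly hdom hsurj
    have hchoice : ∀ i : I, ∃ b, q (fun t => t.1 i) = some b := fun i =>
      (hdom _).mpr ⟨i, rfl⟩
    choose t' ht' using hchoice
    have ht'mem : t' ∈ closureB S T := by
      intro G hG
      obtain ⟨⟨φ, rfl⟩, hTG⟩ := hG
      refine ⟨fun a ha => ?_, fun e he => ?_⟩
      · exact hpoly a.1 (fun t m => t.1 (a.2 m))
          (fun t => (hTG t.2).1 a ha) (fun m => t' (a.2 m))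
          (fun m => ht' (a.2 m))
      · have hpi : (fun t : ↥T => t.1 e.1) = (fun t : ↥T => t.1 e.2) := by
          funext t; exact (hTG t.2).2 e he
        have h1 := ht' e.1
        have h2 := ht' e.2
        rw [hpi, h2] at h1
        exact (Option.some_injective B h1).symm
    have ht'surj : Function.Surjective t' := by
      intro b
      obtain ⟨h, hb⟩ := hsurj b
      obtain ⟨i, rfl⟩ := (hdom h).mp ⟨b, hb⟩
      refine ⟨i, ?_⟩
      have := ht' i
      rw [hb] at this
      exact (Option.some_injective B this).symm
    obtain ⟨γ, hγ, t, htT, ht'eq⟩ := hSC t' ht'mem ht'surj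
    refine ⟨⟨t, htT⟩, γ, hγ, ?_⟩
    intro h b hqb
    obtain ⟨i, rfl⟩ := (hdom h).mp ⟨b, hqb⟩
    have := ht' i
    rw [hqb] at this
    have hb : b = t' i := Option.some_injective B this
    rw [hb, ht'eq]
  · -- polymorphism condition → SurjClosed
    intro hyp t' ht' hsurj
    classical
    set q : (↥T → B) → Option B := fun h =>
      if hh : ∃ i : I, h = fun t => t.1 i then some (t' hh.choose) else none
      with hq
    -- key computation: q at π_i is some (t' i)
    have hqpi : ∀ i : I, q (fun t => t.1 i) = some (t' i) := by
      intro i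
      have hh : ∃ j : I, (fun t : ↥T => t.1 i) = fun t => t.1 j := ⟨i, rfl⟩
      have hspec := hh.choose_spec
      simp only [hq, dif_pos hh]
      exact congrArg some (closure_eq_of_pi_eq S T ht' hspec.symm)
    have hdom : ∀ h : ↥T → B, (∃ b, q h = some b) ↔ ∃ i : I, h = fun t => t.1 i := by
      intro h
      constructor
      · rintro ⟨b, hb⟩
        by_contra hcon
        simp only [hq, dif_neg hcon] at hb
        exact nomatch hb
      · rintro ⟨i, rfl⟩
        exact ⟨t' i, hqpi i⟩
    have hpoly : IsPPoly S q := by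
      intro s sel hrel u hu
      have hex : ∀ m, ∃ i : I, (fun t : ↥T => sel t m) = fun t => t.1 i := by
        intro m
        exact (hdom _).mp ⟨u m, hu m⟩
      choose iv hiv using hex
      have hum : ∀ m, u m = t' (iv m) := by
        intro m
        have := hu m
        rw [hiv m, hqpi (iv m)] at this
        exact (Option.some_injective B this).symm
      have hrel' : S.rel s (fun m => t' (iv m)) := by
        refine closure_rel S T ht' s iv ?_
        intro t htT
        have : (fun m => t (iv m)) = sel ⟨t, htT⟩ := by
          funext m
          exact (congrFun (hiv m) ⟨t, htT⟩).symm
        rw [this]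
        exact hrel ⟨t, htT⟩
      have : u = fun m => t' (iv m) := funext hum
      rw [this]
      exact hrel'
    have hqsurj : ∀ b : B, ∃ h, q h = some b := by
      intro b
      obtain ⟨i, rfl⟩ := hsurj b
      exact ⟨fun t => t.1 i, hqpi i⟩
    obtain ⟨t, γ, hγ, hqb⟩ := hyp q hpoly hdom hqsurj
    refine ⟨γ, hγ, t.1, t.2, ?_⟩
    funext i
    exact hqb (fun t => t.1 i) (t' i) (hqpi i)
end

section
/- (Inner symmetry theorem) Let B be a finite structure, F an encoding for B over domain set D, and σ = (ρ, τ) an inner symmetry: ρ: D → D is a bijection, τ an automorphism of B, and F = { σ̃ ∘ f : f ∈ F }, where for f: D^k → B, σ̃(f) = τ ∘ f ∘ (ρ,...,ρ). Extend σ̃ to applications by σ̃((v̄, f)) = (v̄, σ̃(f)). Let V be a nonempty finite set, T_V = { t[g] : g ∈ G_{V,D} } where t[g] maps each application ((v_1,...,v_k), f) to f(g(v_1),...,g(v_k)). Then for any map u: A_{V,F} → B, defining u'(α) = u(σ̃(α)), we have u ∈ ⟨T_V⟩_B if and only if u' ∈ ⟨T_V⟩_B. -/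
/-- An element of an encoding: a map from some finite power `D^k` to `B`. -/
abbrev EncMap (D B : Type) := (k : ℕ) × ((Fin k → D) → B)

/-- The set `A_{V,F}` of `(V,F)`-applications: pairs of a map `f ∈ F` of arity `k`
together with a `k`-tuple of variables from `V`. -/
def AppSet {D B : Type} (F : Set (EncMap D B)) (V : Type) :
    Set ((k : ℕ) × (((Fin k → D) → B) × (Fin k → V))) :=
  {p | (⟨p.1, p.2.1⟩ : EncMap D B) ∈ F}

/-- The assignment `t[g] : A_{V,F} → B` induced by `g : V → D`. -/
def tmap {D B : Type} {F : Set (EncMap D B)} {V : Type} (g : V → D) :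
    ↥(AppSet F V) → B :=
  fun α => α.1.2.1 (fun i => g (α.1.2.2 i))

/-- `T_V = { t[g] : g ∈ G_{V,D} }`. -/
def TV {D B : Type} (F : Set (EncMap D B)) (V : Type) : Set (↥(AppSet F V) → B) :=
  Set.range (fun g : V → D => tmap (F := F) (V := V) g)

/-- `B` (as structure `S`) is `F`-stable: for every nonempty finite `V`,
every map in `T_V` is surjective and `T_V` is surjectively closed. -/
def FStable {D B : Type} (S : RelStruct B) (F : Set (EncMap D B)) : Prop :=
  ∀ (V : Type) [Fintype V] [Nonempty V],
    (∀ g : V → D, Function.Surjective (tmap (F := F) (V := V) g)) ∧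
    SurjClosed S (TV F V)

/-- The action of an inner symmetry `σ = (ρ,τ)` on applications:
`σ̃((v̄,f)) = (v̄, τ ∘ f ∘ (ρ,...,ρ))`. -/
def appAct {D B V : Type} (ρ : D → D) (τ : B → B)
    (p : (k : ℕ) × (((Fin k → D) → B) × (Fin k → V))) :
    (k : ℕ) × (((Fin k → D) → B) × (Fin k → V)) :=
  ⟨p.1, fun d => τ (p.2.1 (fun i => ρ (d i))), p.2.2⟩

/-- Satisfaction is invariant under postcomposition with an automorphism. -/
lemma sat_comp_auto {B : Type} {S : RelStruct B} {I : Type} (τ : B → B)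
    (hτ : IsAuto S τ) (φ : AndFormula S I) (f : I → B) :
    φ.Sat f ↔ φ.Sat (fun i => τ (f i)) := by
  constructor
  · rintro ⟨h1, h2⟩
    exact ⟨fun a ha => (hτ.2 a.1 _).mp (h1 a ha), fun e he => congrArg τ (h2 e he)⟩
  · rintro ⟨h1, h2⟩
    exact ⟨fun a ha => (hτ.2 a.1 _).mpr (h1 a ha), fun e he => hτ.1.1 (h2 e he)⟩

/-- Key lemma: if precomposition by `e` sends every `t ∈ T` to `τ ∘ s` for some
`s ∈ T₀`, then precomposition by `e` maps `⟨T⟩_B` into `⟨T₀⟩_B`. -/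
lemma key_reindex {B I I₀ : Type} (S : RelStruct B) (τ : B → B) (hτ : IsAuto S τ)
    (T : Set (I → B)) (T₀ : Set (I₀ → B)) (e : I₀ → I)
    (hT : ∀ t ∈ T, ∃ s ∈ T₀, (fun i => t (e i)) = fun i => τ (s i))
    (u : I → B) (hu : u ∈ closureB S T) :
    (fun i => u (e i)) ∈ closureB S T₀ := by
  intro G hG
  obtain ⟨⟨φ, hφ⟩, hTG⟩ := hG
  set ψ : AndFormula S I :=
    ⟨(fun a : (s : S.symb) × (Fin (S.arity s) → I₀) =>
        (⟨a.1, fun j => e (a.2 j)⟩ : (s : S.symb) × (Fin (S.arity s) → I))) '' φ.atoms,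
      (fun p : I₀ × I₀ => (e p.1, e p.2)) '' φ.eqs⟩ with hψ
  have hpre : ∀ w : I → B, ψ.Sat w ↔ φ.Sat (fun i => w (e i)) := by
    intro w
    constructor
    · rintro ⟨h1, h2⟩
      exact ⟨fun a ha => h1 ⟨a.1, fun j => e (a.2 j)⟩ ⟨a, ha, rfl⟩,
             fun p hp => h2 (e p.1, e p.2) ⟨p, hp, rfl⟩⟩
    · rintro ⟨h1, h2⟩
      constructor
      · rintro a ⟨a', ha', rfl⟩; exact h1 a' ha'
      · rintro p ⟨p', hp', rfl⟩; exact h2 p' hp'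
  have hTψ : T ⊆ {w | ψ.Sat w} := by
    intro t ht
    obtain ⟨s, hs, hts⟩ := hT t ht
    have hsG : s ∈ G := hTG hs
    rw [hφ] at hsG
    have hsφ : φ.Sat s := hsG
    have : ψ.Sat t := by
      rw [hpre t, hts]
      exact (sat_comp_auto τ hτ φ s).mp hsφ
    exact this
  have huψ : ψ.Sat u := hu {w | ψ.Sat w} ⟨⟨ψ, rfl⟩, hTψ⟩
  rw [hφ]
  exact (hpre u).mp huψ

/-- Inner symmetry theorem: if `(ρ,τ)` is an inner symmetry of `S` and `F`,
then for `u' : A_{V,F} → B` given by `u'(α) = u(σ̃(α))`, we have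
`u ∈ ⟨T_V⟩_B ↔ u' ∈ ⟨T_V⟩_B`. -/
theorem stmt7 {D B : Type} [Fintype D] [Fintype B] (S : RelStruct B)
    (F : Set (EncMap D B)) (ρ : D → D) (τ : B → B)
    (hρ : Function.Bijective ρ) (hτ : IsAuto S τ)
    (hF : F = (fun f : EncMap D B =>
      (⟨f.1, fun d => τ (f.2 (fun i => ρ (d i)))⟩ : EncMap D B)) '' F)
    (V : Type) [Fintype V] [Nonempty V]
    (u u' : ↥(AppSet F V) → B)
    (hu' : ∀ (α : ↥(AppSet F V)) (h : appAct ρ τ α.1 ∈ AppSet F V),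
      u' α = u ⟨appAct ρ τ α.1, h⟩) :
    u ∈ closureB S (TV F V) ↔ u' ∈ closureB S (TV F V) := by
  -- the action `σ̃` preserves `AppSet F V`
  have himg : ∀ p ∈ AppSet F V, appAct ρ τ p ∈ AppSet F V := by
    intro p hp
    have : (⟨p.1, p.2.1⟩ : EncMap D B) ∈ F := hp
    show (⟨p.1, fun d => τ (p.2.1 (fun i => ρ (d i)))⟩ : EncMap D B) ∈ F
    rw [hF]
    exact ⟨⟨p.1, p.2.1⟩, this, rfl⟩
  -- `σ̃` as a map on the subtype
  set m : ↥(AppSet F V) → ↥(AppSet F V) :=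
    fun α => ⟨appAct ρ τ α.1, himg _ α.2⟩ with hm
  -- bijectivity of `m`
  have hρinv : ∀ d : D, ρ (Function.surjInv hρ.2 d) = d :=
    fun d => Function.surjInv_eq hρ.2 d
  have minj : Function.Injective m := by
    rintro ⟨⟨k, f, v⟩, hα⟩ ⟨⟨k', f', v'⟩, hα'⟩ h
    have h1 : appAct (V := V) ρ τ ⟨k, f, v⟩ = appAct ρ τ ⟨k', f', v'⟩ :=
      congrArg Subtype.val h
    simp only [appAct] at h1
    obtain ⟨rfl, h2⟩ := Sigma.mk.inj_iff.mp h1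
    have h2' : ((fun d : Fin k → D => τ (f (fun i => ρ (d i)))), v)
        = ((fun d : Fin k → D => τ (f' (fun i => ρ (d i)))), v') := eq_of_heq h2
    obtain ⟨h3, h4⟩ := Prod.mk.injEq _ _ _ _ ▸ h2'
    have hf : f = f' := by
      funext d
      have := congrFun h3 (fun i => Function.surjInv hρ.2 (d i))
      simp only [hρinv] at this
      exact hτ.1.1 this
    subst hf; subst h4; rfl
  have msurj : Function.Surjective m := by
    rintro ⟨⟨k, f, v⟩, hβ⟩
    have hmem : (⟨k, f⟩ : EncMap D B) ∈ F := hβ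
    rw [hF] at hmem
    obtain ⟨⟨k', f'⟩, hf'F, heq⟩ := hmem
    obtain ⟨rfl, h2⟩ := Sigma.mk.inj_iff.mp heq
    have h2' : (fun d => τ (f' (fun i => ρ (d i)))) = f := eq_of_heq h2
    refine ⟨⟨⟨k', f', v⟩, hf'F⟩, ?_⟩
    apply Subtype.ext
    show appAct ρ τ ⟨k', f', v⟩ = ⟨k', f, v⟩
    simp only [appAct]
    rw [h2']
  set eA : ↥(AppSet F V) ≃ ↥(AppSet F V) :=
    Equiv.ofBijective m ⟨minj, msurj⟩ with heA
  -- `u'` is `u ∘ eA`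
  have hu'eq : u' = fun α => u (eA α) := by
    funext α
    exact hu' α (himg _ α.2)
  -- the inverse automorphism
  set τi : B → B := fun b => (Equiv.ofBijective τ hτ.1).symm b with hτi
  have hττi : ∀ b, τ (τi b) = b := fun b =>
    (Equiv.ofBijective τ hτ.1).apply_symm_apply b
  have hτiτ : ∀ b, τi (τ b) = b := fun b =>
    (Equiv.ofBijective τ hτ.1).symm_apply_apply b
  have hτiAuto : IsAuto S τi := by
    refine ⟨(Equiv.ofBijective τ hτ.1).symm.bijective, fun s v => ?_⟩
    have := hτ.2 s (fun j => τi (v j))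
    simp only [hττi] at this
    exact this.symm
  constructor
  · intro hu
    rw [hu'eq]
    refine key_reindex S τ hτ (TV F V) (TV F V) (fun α => eA α) ?_ u hu
    rintro t ⟨g, rfl⟩
    refine ⟨tmap (fun v => ρ (g v)), ⟨fun v => ρ (g v), rfl⟩, ?_⟩
    funext α
    rfl
  · intro hu'mem
    have h := key_reindex S τi hτiAuto (TV F V) (TV F V) (fun β => eA.symm β) ?_ u' hu'mem
    · have : (fun β => u' (eA.symm β)) = u := by
        funext β
        rw [hu'eq]
        simp
      rwa [this] at h
    · rintro t ⟨g, rfl⟩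
      refine ⟨tmap (fun v => Function.surjInv hρ.2 (g v)),
        ⟨fun v => Function.surjInv hρ.2 (g v), rfl⟩, ?_⟩
      funext β
      obtain ⟨α, rfl⟩ := eA.surjective β
      show tmap g (eA.symm (eA α)) = τi (tmap (fun v => Function.surjInv hρ.2 (g v)) (eA α))
      rw [eA.symm_apply_apply]
      have hcalc : tmap (fun v => Function.surjInv hρ.2 (g v)) (eA α)
          = τ (α.1.2.1 (fun i => ρ (Function.surjInv hρ.2 (g (α.1.2.2 i))))) := rfl
      rw [hcalc]
      simp only [hρinv, hτiτ]
      rfl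
end

section
/- In the no-rainbow structure N on {0,1,2}, the not-all-equal relation NAE = {0,1}^3 \ {(0,0,0),(1,1,1)} is expressible as follows: for all g: {u_1,u_2,u_3} → {0,1}, (g(u_1),g(u_2),g(u_3)) ∈ NAE if and only if ([01](g(u_1)), [12](g(u_2)), [20](g(u_3))) ∈ R^N, where [ab] denotes the map {0,1} → {0,1,2} sending 0 ↦ a and 1 ↦ b, and R^N = {(a,b,c) ∈ {0,1,2}^3 : {a,b,c} ≠ {0,1,2}}. -/
/-- The not-all-equal relation on `{0,1}` is expressed by the no-rainbow
relation `R^N` via the injective maps `[01]`, `[12]`, `[20] : {0,1} → {0,1,2}`: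
for every `g : {u₁,u₂,u₃} → {0,1}`, `(g u₁, g u₂, g u₃) ∈ NAE` iff
`([01](g u₁), [12](g u₂), [20](g u₃)) ∈ R^N`. -/
theorem stmt11 (g : Fin 3 → Fin 2) :
    (¬(g 0 = g 1 ∧ g 1 = g 2)) ↔
      ({(![0, 1] : Fin 2 → Fin 3) (g 0), (![1, 2] : Fin 2 → Fin 3) (g 1),
        (![2, 0] : Fin 2 → Fin 3) (g 2)} : Set (Fin 3)) ≠ Set.univ := by
  simp only [Set.ne_univ_iff_exists_notMem, Set.mem_insert_iff, Set.mem_singleton_iff]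
  revert g; decide
end

section
/- Fix a finite structure B and an encoding F for B (over domain set D). If B is F-stable and D is any F-induced template of B, then CSP(D) polynomial-time many-one reduces to SCSP(B): for each ∧-formula φ over the signature of D with variable set V, the formula ψ = ψ₀ ∧ ψ₁ (where ψ₀ defines ⟨T_V⟩_B and ψ₁ translates each atom of φ via the definitions of the induced relations) has the property that φ is satisfiable over D if and only if (A_{V,F}, ψ) has a surjective satisfying assignment over B. -/
/-- Renaming variables of an application: apply `c : U → V` to the variable
tuple of an application over `U`, yielding one over `V`. -/
def appRename {D B : Type} {F : Set (EncMap D B)} {U V : Type} (c : U → V)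
    (β : ↥(AppSet F U)) : ↥(AppSet F V) :=
  ⟨⟨β.1.1, β.1.2.1, fun i => c (β.1.2.2 i)⟩, β.2⟩

/-- `Q` is a relation of `S` or the equality relation on `B` (up to recasting
of the arity index). -/
def IsRelOrEq {B : Type} (S : RelStruct B) {r : ℕ} (Q : (Fin r → B) → Prop) : Prop :=
  (∃ (sym : S.symb) (h : S.arity sym = r),
      ∀ v : Fin r → B, Q v ↔ S.rel sym (fun j => v (Fin.cast h j))) ∨
  (∃ h : r = 2, ∀ v : Fin r → B,
      Q v ↔ v (Fin.cast h.symm 0) = v (Fin.cast h.symm 1))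

/-- Theorem 2.5: if `B` (as structure `S`) is `F`-stable and `T` is an
`F`-induced template (each relation of `T` has positive arity and a definition
`(Q sym, α sym)` from a relation of `S` or equality), then for every
equality-free ∧-formula `φ` over the signature of `T` with variable set `V`,
and every ∧-formula `ψ` over the signature of `S` with variables `A_{V,F}`
whose satisfying assignments are exactly those in `⟨T_V⟩_B` that also satisfy
every translated atom of `φ`, it holds that: `φ` has a satisfying assignment
over `T` iff `(A_{V,F}, ψ)` has a surjective satisfying assignment over `S`.
This expresses the reduction from `CSP(D)` to `SCSP(B)`. -/
theorem stmt15 {D B : Type} [Fintype D] [Fintype B] (S : RelStruct B)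
    (F : Set (EncMap D B)) (hstable : FStable S F)
    (T : RelStruct D)
    (r : T.symb → ℕ)
    (Q : (sym : T.symb) → (Fin (r sym) → B) → Prop)
    (hQ : ∀ sym, IsRelOrEq S (Q sym))
    (α : (sym : T.symb) → Fin (r sym) → ↥(AppSet F (Fin (T.arity sym))))
    (hαpos : ∀ sym, 1 ≤ T.arity sym)
    (hdef : ∀ (sym : T.symb) (d : Fin (T.arity sym) → D),
      T.rel sym d ↔ Q sym (fun j => tmap (F := F) d (α sym j)))
    (V : Type) [Fintype V] [Nonempty V]
    (φ : AndFormula T V) (hφ : φ.eqs = ∅)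
    (ψ : AndFormula S ↥(AppSet F V))
    (hψ : {t : ↥(AppSet F V) → B | ψ.Sat t} =
      closureB S (TV F V) ∩
        {t | ∀ a ∈ φ.atoms, Q a.1 (fun j => t (appRename a.2 (α a.1 j)))}) :
    (∃ g : V → D, φ.Sat g) ↔
      ∃ t : ↥(AppSet F V) → B, Function.Surjective t ∧ ψ.Sat t := by
  have hψ' : ∀ t : ↥(AppSet F V) → B, ψ.Sat t ↔ t ∈ closureB S (TV F V) ∧
      ∀ a ∈ φ.atoms, Q a.1 (fun j => t (appRename a.2 (α a.1 j))) := by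
    intro t
    have := Set.ext_iff.mp hψ t
    simpa [Set.mem_inter_iff] using this
  constructor
  · rintro ⟨g, hg⟩
    refine ⟨tmap g, (hstable V).1 g, (hψ' _).mpr ⟨?_, ?_⟩⟩
    · intro G hG
      exact hG.2 ⟨g, rfl⟩
    · intro a ha
      exact (hdef a.1 (fun j => g (a.2 j))).mp (hg.1 a ha)
  · rintro ⟨t, hsurj, hsat⟩
    obtain ⟨ht1, ht2⟩ := (hψ' t).mp hsat
    obtain ⟨γ, hγ, t0, ⟨g, rfl⟩, rfl⟩ := (hstable V).2 t ht1 hsurj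
    refine ⟨g, ?_, ?_⟩
    · intro a ha
      have hq := ht2 a ha
      have hq' : Q a.1 (fun j => tmap (F := F) g (appRename a.2 (α a.1 j))) := by
        rcases hQ a.1 with ⟨sym, h, hiff⟩ | ⟨h, hiff⟩
        · rw [hiff]; rw [hiff] at hq
          exact (hγ.2 sym _).mpr hq
        · rw [hiff]; rw [hiff] at hq
          exact hγ.1.1 hq
      exact (hdef a.1 (fun j => g (a.2 j))).mpr hq'
    · intro e he
      rw [hφ] at he
      exact absurd he (Set.notMem_empty e)
end
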